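/- Uniqueness of the telescopic reconstruction: let A and B be two regular N×N real symmetric matrices such that, for every 1 ≤ n ≤ N, the spectra (with multiplicity) of the principal minors A^{(n)} and B^{(n)} coincide, and such that for every 1 ≤ n ≤ N−1 and every unit eigenvector v of A^{(n)}, the inner products ⟨a_A^{(n)}, v⟩ and ⟨a_B^{(n)}, v⟩ have the same sign (both ≥ 0 or both < 0), where a_A^{(n)} and a_B^{(n)} are the off-diagonal parts of the (n+1)-st columns of A and B respectively. Then A = B. -/

import Mathlib

open Matrix

/-- The top-left `n × n` principal submatrix of an `N × N` matrix. -/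
def principalMinor {N : ℕ} (A : Matrix (Fin N) (Fin N) ℝ) (n : ℕ) (h : n ≤ N) :
    Matrix (Fin n) (Fin n) ℝ :=
  A.submatrix (Fin.castLE h) (Fin.castLE h)

/-- A real symmetric `N × N` matrix is regular if every principal minor `A^{(n)}`
(`1 ≤ n ≤ N`) has simple spectrum and consecutive spectra are disjoint. -/
def IsRegularSym {N : ℕ} (A : Matrix (Fin N) (Fin N) ℝ) : Prop :=
  (∀ (n : ℕ) (h : n ≤ N), 1 ≤ n → ((principalMinor A n h).charpoly.roots).Nodup) ∧
  (∀ (n : ℕ) (h : n + 1 ≤ N), 1 ≤ n → ∀ μ : ℝ,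
    ¬((principalMinor A n (Nat.le_of_succ_le h)).charpoly.IsRoot μ ∧
      (principalMinor A (n + 1) h).charpoly.IsRoot μ))

open Polynomial

set_option linter.unusedSectionVars false
set_option maxHeartbeats 1000000

def border {n : ℕ} (C : Matrix (Fin n) (Fin n) ℝ) (a : Fin n → ℝ) (d : ℝ) :
    Matrix (Fin n ⊕ Fin 1) (Fin n ⊕ Fin 1) ℝ :=
  fromBlocks C (Matrix.replicateCol (Fin 1) a) (Matrix.replicateRow (Fin 1) a) (Matrix.of fun _ _ => d)

lemma border_eq {N n : ℕ} (M : Matrix (Fin N) (Fin N) ℝ) (hM : M.IsSymm) (h : n + 1 ≤ N) :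
    border (principalMinor M n (Nat.le_of_succ_le h))
        (fun j => M (Fin.castLE (Nat.le_of_succ_le h) j) ⟨n, h⟩) (M ⟨n, h⟩ ⟨n, h⟩)
      = (principalMinor M (n + 1) h).submatrix finSumFinEquiv finSumFinEquiv := by
  have hsym : ∀ i j, M i j = M j i := by
    intro i j
    exact congrFun (congrFun hM j) i
  have e1 : ∀ q : Fin n, Fin.castLE h (finSumFinEquiv (Sum.inl q)) = Fin.castLE (Nat.le_of_succ_le h) q := by
    intro q; exact Fin.ext (by simp)
  have e2 : ∀ p : Fin 1, Fin.castLE h (finSumFinEquiv (Sum.inr p)) = (⟨n, h⟩ : Fin N) := by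
    intro p; exact Fin.ext (by simp [Fin.eq_zero p])
  ext p q
  rcases p with p | p <;> rcases q with q | q <;>
    simp only [border, fromBlocks, Sum.elim_inl, Sum.elim_inr, Matrix.of_apply,
      Matrix.submatrix_apply, principalMinor, Matrix.replicateCol_apply, Matrix.replicateRow_apply, e1, e2]
  rw [hsym]

variable {n : ℕ}

lemma charmatrix_map_eval {m : Type*} [Fintype m] [DecidableEq m]
    (M : Matrix m m ℝ) (x : ℝ) :
    (charmatrix M).map (evalRingHom x) = x • (1 : Matrix m m ℝ) - M := by
  ext i j
  by_cases h : i = j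
  · subst h; simp [charmatrix_apply_eq]
  · simp [charmatrix_apply_ne _ _ _ h, Matrix.one_apply_ne h]

lemma eval_charpoly' {m : Type*} [Fintype m] [DecidableEq m]
    (M : Matrix m m ℝ) (x : ℝ) :
    M.charpoly.eval x = (x • (1 : Matrix m m ℝ) - M).det := by
  rw [Matrix.charpoly, ← charmatrix_map_eval M x]
  simpa using (RingHom.map_det (evalRingHom x) (charmatrix M))

lemma charpoly_border (C : Matrix (Fin n) (Fin n) ℝ) (a : Fin n → ℝ) (d : ℝ) :
    (border C a d).charpoly = C.charpoly * (X - Polynomial.C d)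
      - (fun i => Polynomial.C (a i)) ⬝ᵥ ((charmatrix C).adjugate *ᵥ (fun i => Polynomial.C (a i))) := by
  rw [← sub_eq_zero]
  apply Polynomial.eq_zero_of_infinite_isRoot
  have hfin : {x : ℝ | (x • (1 : Matrix (Fin n) (Fin n) ℝ) - C).det = 0}.Finite := by
    apply Set.Finite.subset (Polynomial.finite_setOf_isRoot (C.charpoly_monic.ne_zero))
    intro x hx
    show C.charpoly.IsRoot x
    rw [IsRoot.def, eval_charpoly']
    exact hx
  apply Set.Infinite.mono (s := {x : ℝ | (x • (1 : Matrix (Fin n) (Fin n) ℝ) - C).det = 0}ᶜ)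
  swap
  · exact hfin.infinite_compl
  intro x hx
  have hdet : (x • (1 : Matrix (Fin n) (Fin n) ℝ) - C).det ≠ 0 := hx
  set S := x • (1 : Matrix (Fin n) (Fin n) ℝ) - C with hS
  simp only [Set.mem_setOf_eq, IsRoot, eval_sub, eval_mul, eval_X, eval_C, sub_eq_zero]
  -- adjugate evaluation
  have hadj : adjugate S = (adjugate (charmatrix C)).map (evalRingHom x) := by
    rw [hS, ← charmatrix_map_eval C x]
    simpa using (RingHom.map_adjugate (evalRingHom x) (charmatrix C)).symm
  have hdot : eval x ((fun i => Polynomial.C (a i)) ⬝ᵥ ((charmatrix C).adjugate *ᵥ (fun i => Polynomial.C (a i))))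
      = a ⬝ᵥ (adjugate S *ᵥ a) := by
    simp [dotProduct, Matrix.mulVec, hadj, Finset.mul_sum, Finset.sum_mul, eval_finset_sum]
  rw [hdot, eval_charpoly', eval_charpoly', ← hS]
  -- now compute LHS determinant
  have hcm : x • (1 : Matrix (Fin n ⊕ Fin 1) (Fin n ⊕ Fin 1) ℝ) - border C a d
      = fromBlocks S (Matrix.replicateCol (Fin 1) (-a)) (Matrix.replicateRow (Fin 1) (-a)) (Matrix.of fun _ _ => x - d) := by
    ext i j
    rcases i with i | i <;> rcases j with j | j <;>
      simp [border, Matrix.one_apply, hS, Fin.eq_zero]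
  rw [hcm]
  haveI : Invertible S := S.invertibleOfIsUnitDet (isUnit_iff_ne_zero.mpr hdet)
  rw [det_fromBlocks₁₁, invOf_eq_nonsing_inv]
  have h11 : ((Matrix.of fun _ _ => x - d) - Matrix.replicateRow (Fin 1) (-a) * S⁻¹ * Matrix.replicateCol (Fin 1) (-a) : Matrix (Fin 1) (Fin 1) ℝ) 0 0
      = (x - d) - a ⬝ᵥ (S⁻¹ *ᵥ a) := by
    simp [Matrix.mul_apply, dotProduct, Matrix.mulVec, Finset.sum_mul, Finset.mul_sum]
    rw [Finset.sum_comm]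
    exact Finset.sum_congr rfl fun i _ => Finset.sum_congr rfl fun j _ => by ring
  rw [det_fin_one, h11]
  rw [Matrix.inv_def, Ring.inverse_eq_inv']
  rw [smul_mulVec, dotProduct_smul]
  field_simp
  rw [smul_eq_mul, mul_sub, ← mul_assoc, mul_one_div_cancel hdet, one_mul]


lemma charpoly_conj {m : Type*} [Fintype m] [DecidableEq m]
    (P M Q : Matrix m m ℝ) (hPQ : P * Q = 1) :
    (P * M * Q).charpoly = M.charpoly := by
  have h1 : (P.map Polynomial.C) * (Q.map Polynomial.C) = 1 := by
    rw [← Matrix.map_mul, hPQ, Matrix.map_one _ (map_zero _) (map_one _)]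
  have key : charmatrix (P * M * Q) = (P.map Polynomial.C) * charmatrix M * (Q.map Polynomial.C) := by
    rw [charmatrix, charmatrix, RingHom.mapMatrix_apply, RingHom.mapMatrix_apply,
      Matrix.map_mul, Matrix.map_mul, mul_sub, sub_mul]
    congr 1
    symm
    calc (P.map Polynomial.C) * Matrix.scalar m (X : ℝ[X]) * (Q.map Polynomial.C)
        = Matrix.scalar m (X : ℝ[X]) * ((P.map Polynomial.C) * (Q.map Polynomial.C)) := by
          rw [← (Matrix.scalar_commute (X : ℝ[X]) (fun r' => Commute.all _ _) (P.map Polynomial.C)).eq,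
            mul_assoc]
      _ = Matrix.scalar m (X : ℝ[X]) := by rw [h1, mul_one]
  unfold Matrix.charpoly
  rw [key, det_mul, det_mul]
  have h2 : (P.map (Polynomial.C : ℝ →+* ℝ[X])).det * (Q.map (Polynomial.C : ℝ →+* ℝ[X])).det = 1 := by
    rw [← det_mul, h1, det_one]
  linear_combination (charmatrix M).det * h2

lemma charpoly_diagonal {m : Type*} [Fintype m] [DecidableEq m] (d : m → ℝ) :
    (Matrix.diagonal d).charpoly = ∏ i, (X - Polynomial.C (d i)) := by
  have : charmatrix (Matrix.diagonal d) = Matrix.diagonal (fun i => X - Polynomial.C (d i)) := by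
    ext i j
    by_cases h : i = j
    · subst h; simp [charmatrix_apply_eq]
    · simp [charmatrix_apply_ne _ _ _ h, Matrix.diagonal_apply_ne _ h]
  rw [Matrix.charpoly, this, det_diagonal]

lemma charpoly_eq_prod_eigenvalues {m : Type*} [Fintype m] [DecidableEq m]
    {C : Matrix m m ℝ} (hC : C.IsHermitian) :
    C.charpoly = ∏ i, (X - Polynomial.C (hC.eigenvalues i)) := by
  have hU : (hC.eigenvectorUnitary : Matrix m m ℝ) * star (hC.eigenvectorUnitary : Matrix m m ℝ) = 1 :=
    (Matrix.mem_unitaryGroup_iff).mp hC.eigenvectorUnitary.2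
  have hdiag : Matrix.diagonal ((RCLike.ofReal : ℝ → ℝ) ∘ hC.eigenvalues) = Matrix.diagonal hC.eigenvalues := by
    congr 1
  calc C.charpoly
      = ((hC.eigenvectorUnitary : Matrix m m ℝ) * Matrix.diagonal ((RCLike.ofReal : ℝ → ℝ) ∘ hC.eigenvalues)
          * star (hC.eigenvectorUnitary : Matrix m m ℝ)).charpoly := by (conv_lhs => rw [hC.spectral_theorem]); rw [Unitary.conjStarAlgAut_apply]
    _ = (Matrix.diagonal hC.eigenvalues).charpoly := by rw [hdiag]; exact charpoly_conj _ _ _ hU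
    _ = ∏ i, (X - Polynomial.C (hC.eigenvalues i)) := _root_.charpoly_diagonal _

section Helpers
variable {m : Type*} [Fintype m] [DecidableEq m]

omit [DecidableEq m] in
lemma dot_symm_mulVec {C : Matrix m m ℝ} (hC : C.IsHermitian) (x y : m → ℝ) :
    (C *ᵥ x) ⬝ᵥ y = x ⬝ᵥ (C *ᵥ y) := by
  have hsymm : Cᵀ = C := by
    ext i j; have := congrFun (congrFun hC i) j
    simpa [Matrix.conjTranspose_apply] using this
  rw [Matrix.dotProduct_mulVec, ← Matrix.mulVec_transpose, hsymm, dotProduct_comm]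

omit [DecidableEq m] in
lemma euclid_expand (b : OrthonormalBasis m ℝ (EuclideanSpace ℝ m)) (w : m → ℝ) :
    w = ∑ j, ((⇑(b j)) ⬝ᵥ w) • ⇑(b j) := by
  have h := b.sum_repr' ((WithLp.equiv 2 (m → ℝ)).symm w)
  have h2 : ∀ x y : EuclideanSpace ℝ m, (inner ℝ x y : ℝ) = ⇑x ⬝ᵥ ⇑y := by
    intro x y; simp [PiLp.inner_apply, dotProduct, mul_comm]
  funext i
  have h3 := congrArg (WithLp.linearEquiv 2 ℝ (m → ℝ)) h
  rw [map_sum] at h3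
  simp only [_root_.map_smul] at h3
  have h5 := congrFun h3 i
  simpa [Finset.sum_apply, smul_eq_mul, h2,
    WithLp.linearEquiv] using h5.symm

lemma basis_dot (b : OrthonormalBasis m ℝ (EuclideanSpace ℝ m)) (i j : m) :
    (⇑(b i)) ⬝ᵥ (⇑(b j)) = if i = j then (1:ℝ) else 0 := by
  have h2 : ∀ x y : EuclideanSpace ℝ m, (inner ℝ x y : ℝ) = ⇑x ⬝ᵥ ⇑y := by
    intro x y; simp [PiLp.inner_apply, dotProduct, mul_comm]
  rw [← h2]
  exact orthonormal_iff_ite.mp b.orthonormal i j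

lemma eigencoef_zero {C : Matrix m m ℝ} (hC : C.IsHermitian) {μ : ℝ} {w : m → ℝ}
    (hw : C *ᵥ w = μ • w) (j : m) :
    (hC.eigenvalues j - μ) * ((⇑(hC.eigenvectorBasis j)) ⬝ᵥ w) = 0 := by
  have h1 : hC.eigenvalues j * ((⇑(hC.eigenvectorBasis j)) ⬝ᵥ w)
      = μ * ((⇑(hC.eigenvectorBasis j)) ⬝ᵥ w) := by
    calc hC.eigenvalues j * ((⇑(hC.eigenvectorBasis j)) ⬝ᵥ w)
        = (hC.eigenvalues j • ⇑(hC.eigenvectorBasis j)) ⬝ᵥ w := by rw [smul_dotProduct]; rfl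
      _ = (C *ᵥ ⇑(hC.eigenvectorBasis j)) ⬝ᵥ w := by rw [hC.mulVec_eigenvectorBasis]
      _ = ⇑(hC.eigenvectorBasis j) ⬝ᵥ (C *ᵥ w) := dot_symm_mulVec hC _ _
      _ = μ * ((⇑(hC.eigenvectorBasis j)) ⬝ᵥ w) := by rw [hw, dotProduct_smul]; rfl
  nlinarith [h1]

lemma eigen_ker {C : Matrix m m ℝ} (hC : C.IsHermitian)
    (hinj : Function.Injective hC.eigenvalues)
    {μ : ℝ} {v u : m → ℝ} (hv : C *ᵥ v = μ • v) (hv1 : v ⬝ᵥ v = 1)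
    (hu : C *ᵥ u = μ • u) : ∃ t : ℝ, u = t • v := by
  set b := hC.eigenvectorBasis with hb
  -- there is an index with eigenvalue μ
  have hex : ∃ j₀, hC.eigenvalues j₀ = μ := by
    by_contra hne
    push_neg at hne
    have hz : ∀ j, (⇑(b j)) ⬝ᵥ v = 0 := fun j => by
      have := eigencoef_zero hC hv j
      rcases mul_eq_zero.mp this with h | h
      · exact absurd (by linarith) (hne j)
      · exact h
    have : v = 0 := by
      rw [euclid_expand b v]
      simp [hz]
    rw [this] at hv1; simp at hv1
  obtain ⟨j₀, hj₀⟩ := hex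
  have hcoef : ∀ (w : m → ℝ), C *ᵥ w = μ • w → ∀ j, j ≠ j₀ → (⇑(b j)) ⬝ᵥ w = 0 := by
    intro w hw j hj
    have := eigencoef_zero hC hw j
    rcases mul_eq_zero.mp this with h | h
    · exact absurd (hinj (by rw [hj₀]; linarith)) hj
    · exact h
  have hurep : u = ((⇑(b j₀)) ⬝ᵥ u) • ⇑(b j₀) := by
    conv_lhs => rw [euclid_expand b u]
    rw [Finset.sum_eq_single j₀]
    · intro j _ hj; rw [hcoef u hu j hj, zero_smul]
    · intro h; exact absurd (Finset.mem_univ _) h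
  have hvrep : v = ((⇑(b j₀)) ⬝ᵥ v) • ⇑(b j₀) := by
    conv_lhs => rw [euclid_expand b v]
    rw [Finset.sum_eq_single j₀]
    · intro j _ hj; rw [hcoef v hv j hj, zero_smul]
    · intro h; exact absurd (Finset.mem_univ _) h
  have hcv : (⇑(b j₀)) ⬝ᵥ v ≠ 0 := by
    intro h
    rw [h, zero_smul] at hvrep
    rw [hvrep] at hv1; simp at hv1
  refine ⟨((⇑(b j₀)) ⬝ᵥ u) / ((⇑(b j₀)) ⬝ᵥ v), ?_⟩
  calc u = ((⇑(b j₀)) ⬝ᵥ u) • ⇑(b j₀) := hurep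
    _ = (((⇑(b j₀)) ⬝ᵥ u) / ((⇑(b j₀)) ⬝ᵥ v)) • (((⇑(b j₀)) ⬝ᵥ v) • ⇑(b j₀)) := by
        rw [smul_smul, div_mul_cancel₀ _ hcv]
    _ = (((⇑(b j₀)) ⬝ᵥ u) / ((⇑(b j₀)) ⬝ᵥ v)) • v := by rw [← hvrep]

lemma adjugate_rank_one {C : Matrix m m ℝ} (hC : C.IsHermitian)
    (hinj : Function.Injective hC.eigenvalues)
    {μ : ℝ} {v : m → ℝ} (hv : C *ᵥ v = μ • v) (hv1 : v ⬝ᵥ v = 1) :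
    ∃ c : ℝ, adjugate (μ • (1 : Matrix m m ℝ) - C) = c • Matrix.of (fun i j => v i * v j) := by
  set S := μ • (1 : Matrix m m ℝ) - C with hSdef
  have hST : Sᵀ = S := by
    have hsymm : Cᵀ = C := by
      ext i j; have := congrFun (congrFun hC i) j
      simpa [Matrix.conjTranspose_apply] using this
    rw [hSdef, Matrix.transpose_sub, Matrix.transpose_smul, Matrix.transpose_one, hsymm]
  have hSv : ∀ u : m → ℝ, S *ᵥ u = μ • u - C *ᵥ u := by
    intro u
    rw [hSdef, Matrix.sub_mulVec, Matrix.smul_mulVec, Matrix.one_mulVec]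
  have hv0 : v ≠ 0 := by
    intro h; rw [h] at hv1; simp at hv1
  have hdet : S.det = 0 := by
    rw [← Matrix.exists_mulVec_eq_zero_iff]
    exact ⟨v, hv0, by rw [hSv, hv, sub_self]⟩
  have hker : ∀ u : m → ℝ, S *ᵥ u = 0 → ∃ t : ℝ, u = t • v := by
    intro u hu
    apply eigen_ker hC hinj hv hv1
    rw [hSv] at hu
    linear_combination (norm := module) -hu
  have hcol : ∀ j, S *ᵥ (fun i => adjugate S i j) = 0 := by
    intro j
    funext i
    have hmul : S * adjugate S = 0 := by rw [Matrix.mul_adjugate, hdet, zero_smul]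
    have := congrFun (congrFun hmul i) j
    simpa [Matrix.mul_apply, Matrix.mulVec, dotProduct] using this
  choose t ht using fun j => hker _ (hcol j)
  have hentry : ∀ i j, adjugate S i j = t j * v i := by
    intro i j
    have := congrFun (ht j) i
    simpa [Pi.smul_apply, smul_eq_mul] using this
  have hsym : ∀ i j, adjugate S i j = adjugate S j i := by
    intro i j
    conv_lhs => rw [← hST, ← Matrix.adjugate_transpose]
    rfl
  refine ⟨∑ i, t i * v i, ?_⟩
  have htc : ∀ j, t j = (∑ i, t i * v i) * v j := by
    intro j
    have : t j = ∑ i, adjugate S i j * v i := by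
      rw [Finset.sum_congr rfl fun i _ => by rw [hentry i j]]
      simp [dotProduct] at hv1
      rw [show ∑ i, t j * v i * v i = t j * ∑ i, v i * v i by
        rw [Finset.mul_sum]; exact Finset.sum_congr rfl fun i _ => by ring]
      rw [hv1, mul_one]
    rw [this, Finset.sum_congr rfl fun i _ => by rw [hsym i j, hentry j i]]
    rw [Finset.sum_mul]
    exact Finset.sum_congr rfl fun i _ => by ring
  ext i j
  rw [hentry i j, htc j]
  simp [Matrix.smul_apply]
  ring

lemma quad (v a : m → ℝ) (c : ℝ) :
    a ⬝ᵥ ((c • Matrix.of (fun i j => v i * v j)) *ᵥ a) = c * ((a ⬝ᵥ v) * (a ⬝ᵥ v)) := by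
  simp only [dotProduct, Matrix.mulVec, Matrix.smul_apply, Matrix.of_apply, dotProduct,
    smul_eq_mul]
  rw [Finset.sum_mul_sum, Finset.mul_sum]
  refine Finset.sum_congr rfl fun i _ => ?_
  rw [Finset.mul_sum, Finset.mul_sum]
  refine Finset.sum_congr rfl fun j _ => by ring

lemma isHermitian_of_isSymm {C : Matrix m m ℝ} (h : C.IsSymm) : C.IsHermitian := by
  ext i j
  have := congrFun (congrFun h i) j
  simpa [Matrix.conjTranspose_apply, Matrix.transpose_apply] using this

lemma eig_injective {C : Matrix m m ℝ} (hC : C.IsHermitian)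
    (hnodup : C.charpoly.roots.Nodup) : Function.Injective hC.eigenvalues := by
  have hroots : C.charpoly.roots = Finset.univ.val.map hC.eigenvalues := by
    rw [charpoly_eq_prod_eigenvalues hC]
    have : ∏ i, (X - Polynomial.C (hC.eigenvalues i))
        = ((Finset.univ.val.map hC.eigenvalues).map (fun a => X - Polynomial.C a)).prod := by
      rw [Multiset.map_map]
      rfl
    rw [this, Polynomial.roots_multiset_prod_X_sub_C]
  rw [hroots] at hnodup
  intro i j hij
  by_contra hne
  have := Multiset.inj_on_of_nodup_map hnodup
  exact hne (this i (by simp) j (by simp) hij)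

end Helpers

lemma eval_adj_dot {n : ℕ} (C : Matrix (Fin n) (Fin n) ℝ) (a : Fin n → ℝ) (x : ℝ) :
    Polynomial.eval x ((fun i => Polynomial.C (a i)) ⬝ᵥ ((charmatrix C).adjugate *ᵥ (fun i => Polynomial.C (a i))))
      = a ⬝ᵥ (adjugate (x • (1 : Matrix (Fin n) (Fin n) ℝ) - C) *ᵥ a) := by
  have hadj : adjugate (x • (1 : Matrix (Fin n) (Fin n) ℝ) - C)
      = (adjugate (charmatrix C)).map (evalRingHom x) := by
    rw [← charmatrix_map_eval C x]
    simpa using (RingHom.map_adjugate (evalRingHom x) (charmatrix C)).symm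
  simp [dotProduct, Matrix.mulVec, hadj, Finset.mul_sum, Finset.sum_mul, eval_finset_sum]

lemma eval_charpoly_border {n : ℕ} (C : Matrix (Fin n) (Fin n) ℝ) (a : Fin n → ℝ) (d : ℝ) (x : ℝ) :
    Polynomial.eval x (border C a d).charpoly
      = Polynomial.eval x C.charpoly * (x - d) - a ⬝ᵥ (adjugate (x • (1 : Matrix (Fin n) (Fin n) ℝ) - C) *ᵥ a) := by
  rw [charpoly_border, eval_sub, eval_mul, eval_sub, eval_X, eval_C, eval_adj_dot]

lemma step {n : ℕ} {C : Matrix (Fin n) (Fin n) ℝ} (hCsymm : C.IsSymm)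
    (hnodup : C.charpoly.roots.Nodup) {a b : Fin n → ℝ} {d e : ℝ}
    (hchar : (border C a d).charpoly = (border C b e).charpoly)
    (hdisj : ∀ μ : ℝ, ¬(C.charpoly.IsRoot μ ∧ (border C a d).charpoly.IsRoot μ))
    (hsign : ∀ v : Fin n → ℝ, v ⬝ᵥ v = 1 → (∃ μ : ℝ, C *ᵥ v = μ • v) → (0 ≤ a ⬝ᵥ v ↔ 0 ≤ b ⬝ᵥ v)) :
    a = b ∧ d = e := by
  have hC : C.IsHermitian := isHermitian_of_isSymm hCsymm
  have hinj : Function.Injective hC.eigenvalues := eig_injective hC hnodup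
  constructor
  · -- a = b
    have key : ∀ j : Fin n, a ⬝ᵥ ⇑(hC.eigenvectorBasis j) = b ⬝ᵥ ⇑(hC.eigenvectorBasis j) := by
      intro j
      set v : Fin n → ℝ := ⇑(hC.eigenvectorBasis j) with hvdef
      set μ : ℝ := hC.eigenvalues j with hμdef
      have hv : C *ᵥ v = μ • v := hC.mulVec_eigenvectorBasis j
      have hv1 : v ⬝ᵥ v = 1 := by simpa using basis_dot hC.eigenvectorBasis j j
      obtain ⟨c, hc⟩ := adjugate_rank_one hC hinj hv hv1
      have hroot : C.charpoly.IsRoot μ := by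
        rw [charpoly_eq_prod_eigenvalues hC, Polynomial.IsRoot.def, Polynomial.eval_prod]
        exact Finset.prod_eq_zero (Finset.mem_univ j) (by simp [hμdef])
      have hevalA : Polynomial.eval μ (border C a d).charpoly = -(c * ((a ⬝ᵥ v) * (a ⬝ᵥ v))) := by
        rw [eval_charpoly_border, Polynomial.IsRoot.def.mp hroot, zero_mul, zero_sub, hc, quad]
      have hevalB : Polynomial.eval μ (border C b e).charpoly = -(c * ((b ⬝ᵥ v) * (b ⬝ᵥ v))) := by
        rw [eval_charpoly_border, Polynomial.IsRoot.def.mp hroot, zero_mul, zero_sub, hc, quad]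
      have hne : Polynomial.eval μ (border C a d).charpoly ≠ 0 := by
        intro h
        exact hdisj μ ⟨hroot, h⟩
      have heq : c * ((a ⬝ᵥ v) * (a ⬝ᵥ v)) = c * ((b ⬝ᵥ v) * (b ⬝ᵥ v)) := by
        have := hevalA.symm.trans ((congrArg (Polynomial.eval μ) hchar).trans hevalB)
        linarith [this]
      have hc0 : c ≠ 0 := by
        intro h; rw [h, zero_mul, neg_zero] at hevalA; exact hne hevalA
      have hsq : (a ⬝ᵥ v) * (a ⬝ᵥ v) = (b ⬝ᵥ v) * (b ⬝ᵥ v) := mul_left_cancel₀ hc0 heq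
      have hs := hsign v hv1 ⟨μ, hv⟩
      rcases mul_self_eq_mul_self_iff.mp hsq with h | h
      · exact h
      · -- a ⬝ᵥ v = -(b ⬝ᵥ v)
        by_cases hb0 : 0 ≤ b ⬝ᵥ v
        · have ha0 : 0 ≤ a ⬝ᵥ v := hs.mpr hb0
          have : a ⬝ᵥ v ≤ 0 := by rw [h]; linarith
          have ha : a ⬝ᵥ v = 0 := le_antisymm this ha0
          rw [ha] at h ⊢; linarith
        · push_neg at hb0
          have ha0 : a ⬝ᵥ v < 0 := by
            by_contra hh
            push_neg at hh
            exact absurd (hs.mp hh) (not_le.mpr hb0)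
          rw [h] at ha0; linarith
    have hz : ∀ j : Fin n, (⇑(hC.eigenvectorBasis j)) ⬝ᵥ (a - b) = 0 := by
      intro j
      rw [dotProduct_comm, sub_dotProduct, key j, sub_self]
    have hab : a - b = 0 := by
      have hexp := euclid_expand hC.eigenvectorBasis (a - b)
      rw [hexp]
      simp only [hz, zero_smul, Finset.sum_const_zero]
    exact sub_eq_zero.mp hab
  · -- d = e
    have hcoef := congrArg (fun p : Polynomial ℝ => p.coeff (Fintype.card (Fin n ⊕ Fin 1) - 1)) hchar
    have htrA := Matrix.trace_eq_neg_charpoly_coeff (border C a d)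
    have htrB := Matrix.trace_eq_neg_charpoly_coeff (border C b e)
    have : (border C a d).trace = (border C b e).trace := by
      rw [htrA, htrB]
      simpa using hcoef
    have htr : ∀ (u : Fin n → ℝ) (x : ℝ), (border C u x).trace = C.trace + x := by
      intro u x
      simp [Matrix.trace, border, Fintype.sum_sum_type, fromBlocks, Matrix.diag]
    rw [htr, htr] at this
    linarith


lemma pm_symm {N : ℕ} (M : Matrix (Fin N) (Fin N) ℝ) (hM : M.IsSymm) (n : ℕ) (h : n ≤ N) :
    (principalMinor M n h).IsSymm := by
  show (principalMinor M n h)ᵀ = principalMinor M n h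
  ext i j
  exact congrFun (congrFun hM (Fin.castLE h i)) (Fin.castLE h j)

lemma charpoly_pm_zero {N : ℕ} (M : Matrix (Fin N) (Fin N) ℝ) (h : 0 ≤ N) :
    (principalMinor M 0 h).charpoly = 1 := by
  rw [Matrix.charpoly, Matrix.det_isEmpty]

/-- Uniqueness of the telescopic reconstruction: two regular real symmetric matrices
whose nested principal minors have the same spectra (with multiplicity) and whose
off-diagonal column parts have projections of the same sign onto every unit
eigenvector of the corresponding minor are equal. -/
theorem telescopic_unique {N : ℕ} (A B : Matrix (Fin N) (Fin N) ℝ)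
    (hAsymm : A.IsSymm) (hBsymm : B.IsSymm)
    (hregA : IsRegularSym A) (hregB : IsRegularSym B)
    (hspec : ∀ (n : ℕ) (h : n ≤ N), 1 ≤ n →
      (principalMinor A n h).charpoly = (principalMinor B n h).charpoly)
    (hsign : ∀ (n : ℕ) (h : n + 1 ≤ N), 1 ≤ n → ∀ v : Fin n → ℝ, v ⬝ᵥ v = 1 →
      (∃ μ : ℝ, (principalMinor A n (Nat.le_of_succ_le h)).mulVec v = μ • v) →
      ((0 ≤ (fun j : Fin n => A (Fin.castLE (Nat.le_of_succ_le h) j) ⟨n, h⟩) ⬝ᵥ v) ↔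
        (0 ≤ (fun j : Fin n => B (Fin.castLE (Nat.le_of_succ_le h) j) ⟨n, h⟩) ⬝ᵥ v))) :
    A = B := by
  have key : ∀ (n : ℕ) (h : n ≤ N), principalMinor A n h = principalMinor B n h := by
    intro n
    induction n with
    | zero => intro h; ext i j; exact i.elim0
    | succ m ih =>
      intro h
      have hCeq : principalMinor A m (Nat.le_of_succ_le h) = principalMinor B m (Nat.le_of_succ_le h) :=
        ih (Nat.le_of_succ_le h)
      have hsub : ∀ (X : Matrix (Fin (m+1)) (Fin (m+1)) ℝ),
          ((X.submatrix finSumFinEquiv finSumFinEquiv).submatrix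
            finSumFinEquiv.symm finSumFinEquiv.symm) = X := by
        intro X
        rw [Matrix.submatrix_submatrix]
        simp
      have hchsub : ∀ (X : Matrix (Fin (m+1)) (Fin (m+1)) ℝ),
          (X.submatrix finSumFinEquiv finSumFinEquiv).charpoly = X.charpoly := by
        intro X
        have : X.submatrix (⇑finSumFinEquiv) (⇑finSumFinEquiv)
            = Matrix.reindex finSumFinEquiv.symm finSumFinEquiv.symm X := by
          simp [Matrix.reindex_apply]
        rw [this]
        exact Matrix.charpoly_reindex _ _
      have hbA := border_eq A hAsymm h
      have hbB := border_eq B hBsymm h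
      have hchA : (border (principalMinor A m (Nat.le_of_succ_le h))
            (fun j => A (Fin.castLE (Nat.le_of_succ_le h) j) ⟨m, h⟩) (A ⟨m, h⟩ ⟨m, h⟩)).charpoly
          = (principalMinor A (m+1) h).charpoly := by
        rw [hbA]; exact hchsub _
      have hchB : (border (principalMinor A m (Nat.le_of_succ_le h))
            (fun j => B (Fin.castLE (Nat.le_of_succ_le h) j) ⟨m, h⟩) (B ⟨m, h⟩ ⟨m, h⟩)).charpoly
          = (principalMinor B (m+1) h).charpoly := by
        rw [hCeq, hbB]; exact hchsub _
      have hnodup : (principalMinor A m (Nat.le_of_succ_le h)).charpoly.roots.Nodup := by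
        rcases Nat.eq_zero_or_pos m with hm0 | hm1
        · subst hm0
          rw [charpoly_pm_zero]
          simp
        · exact hregA.1 m (Nat.le_of_succ_le h) hm1
      have hch : (border (principalMinor A m (Nat.le_of_succ_le h))
            (fun j => A (Fin.castLE (Nat.le_of_succ_le h) j) ⟨m, h⟩) (A ⟨m, h⟩ ⟨m, h⟩)).charpoly
          = (border (principalMinor A m (Nat.le_of_succ_le h))
            (fun j => B (Fin.castLE (Nat.le_of_succ_le h) j) ⟨m, h⟩) (B ⟨m, h⟩ ⟨m, h⟩)).charpoly := by
        rw [hchA, hchB]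
        exact hspec (m+1) h (by omega)
      have hdisj : ∀ μ : ℝ, ¬((principalMinor A m (Nat.le_of_succ_le h)).charpoly.IsRoot μ ∧
          (border (principalMinor A m (Nat.le_of_succ_le h))
            (fun j => A (Fin.castLE (Nat.le_of_succ_le h) j) ⟨m, h⟩)
            (A ⟨m, h⟩ ⟨m, h⟩)).charpoly.IsRoot μ) := by
        intro μ hμ
        rcases Nat.eq_zero_or_pos m with hm0 | hm1
        · subst hm0
          have h1 := hμ.1
          rw [charpoly_pm_zero] at h1
          simpa using h1
        · rw [hchA] at hμ
          exact hregA.2 m h hm1 μ hμ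
      have hsign' : ∀ v : Fin m → ℝ, v ⬝ᵥ v = 1 →
          (∃ μ : ℝ, (principalMinor A m (Nat.le_of_succ_le h)) *ᵥ v = μ • v) →
          (0 ≤ (fun j => A (Fin.castLE (Nat.le_of_succ_le h) j) ⟨m, h⟩) ⬝ᵥ v ↔
            0 ≤ (fun j => B (Fin.castLE (Nat.le_of_succ_le h) j) ⟨m, h⟩) ⬝ᵥ v) := by
        rcases Nat.eq_zero_or_pos m with hm0 | hm1
        · subst hm0
          intro v hv
          simp [dotProduct] at hv
        · exact hsign m h hm1
      obtain ⟨hab, hde⟩ := step (pm_symm A hAsymm m (Nat.le_of_succ_le h)) hnodup hch hdisj hsign'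
      have hbeq : border (principalMinor A m (Nat.le_of_succ_le h))
            (fun j => A (Fin.castLE (Nat.le_of_succ_le h) j) ⟨m, h⟩) (A ⟨m, h⟩ ⟨m, h⟩)
          = border (principalMinor B m (Nat.le_of_succ_le h))
            (fun j => B (Fin.castLE (Nat.le_of_succ_le h) j) ⟨m, h⟩) (B ⟨m, h⟩ ⟨m, h⟩) := by
        rw [← hCeq, hab, hde]
      have hfin := congrArg
        (fun X : Matrix (Fin m ⊕ Fin 1) (Fin m ⊕ Fin 1) ℝ =>
          X.submatrix finSumFinEquiv.symm finSumFinEquiv.symm)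
        ((hbA.symm.trans hbeq).trans hbB)
      simpa only [hsub] using hfin
  have hNN := key N le_rfl
  ext i j
  have h2 := congrFun (congrFun hNN (Fin.castLT i i.isLt)) (Fin.castLT j j.isLt)
  simp only [principalMinor, Matrix.submatrix_apply] at h2
  convert h2 using 2 <;> exact Fin.ext rfl
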